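/- arXiv:1908.06428 — 2 statements merged into one kernel-verified Lean document; each statement's English description precedes it below -/
import Mathlib

section
/- Every SLP producing a binary De Bruijn sequence of order n has size at least c·2ⁿ/n for some absolute constant c > 0. -/
/-- A straight-line program over alphabet `α`, in topologically-sorted form:
nonterminals are `Fin n`, each has exactly one nonempty right-hand side, and
right-hand sides only refer to strictly smaller nonterminals (acyclicity). -/
structure SLP (α : Type) where
  n : ℕ
  rhs : Fin n → List (α ⊕ Fin n)
  rhs_ne : ∀ i, rhs i ≠ []
  acyc : ∀ i j, Sum.inr j ∈ rhs i → (j : ℕ) < (i : ℕ)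
  start : Fin n

namespace SLP

variable {α : Type}

/-- The word produced by nonterminal `i`. -/
def valAux (G : SLP α) (i : Fin G.n) : List α :=
  (G.rhs i).attach.flatMap (fun s =>
    match s with
    | ⟨Sum.inl a, _⟩ => [a]
    | ⟨Sum.inr j, hj⟩ => G.valAux j)
termination_by (i : ℕ)
decreasing_by exact G.acyc i j hj

/-- The word produced by the SLP. -/
def val (G : SLP α) : List α := G.valAux G.start

/-- The size of the SLP: sum of lengths of all right-hand sides. -/
def size (G : SLP α) : ℕ := ∑ i : Fin G.n, (G.rhs i).length

end SLP

/-- `g w`: the minimal size of an SLP producing `w`. -/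
noncomputable def g {α : Type} (w : List α) : ℕ :=
  sInf { s | ∃ G : SLP α, G.size = s ∧ G.val = w }

/-- `OccursWithoutOverlap v w m` : `v` has (at least) `m` pairwise
non-overlapping occurrences in `w`, witnessed by a decomposition
`w = g₀ v g₁ v ⋯ v gₘ`. -/
def OccursWithoutOverlap {α : Type} (v w : List α) (m : ℕ) : Prop :=
  ∃ gs : List (List α), gs.length = m + 1 ∧ w = List.intercalate v gs

/-- `IsDeBruijn n B` : `B` is a binary De Bruijn sequence of order `n`: it has length
`2^n` and every binary word of length `n` occurs exactly once as a factor of the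
cyclic word `B`, i.e. as a factor of `B ++ B.take (n-1)` starting at a position `< 2^n`. -/
def IsDeBruijn (n : ℕ) (B : List Bool) : Prop :=
  B.length = 2 ^ n ∧
  ∀ v : List Bool, v.length = n →
    ∃! i : ℕ, i < 2 ^ n ∧ ((B ++ B.take (n - 1)).drop i).take n = v


/-!
Every length-`k` factor of the word of a nonterminal either contains the last letter of the
expansion of one of the symbols of its right-hand side, or lies inside the expansion of a
single nonterminal of that right-hand side, and then we descend into it. So each factor is
determined by a symbol occurrence in the grammar together with the offset `< k` of that last
letter inside the factor: a word has at most `g(w)·k` factors of length `k`. A De Bruijn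
sequence of order `n` has `2ⁿ - n + 1` distinct linear factors of length `n`, whence
`2ⁿ - n + 1 ≤ g(B)·n`, and `2n ≤ 2ⁿ` turns this into `c = 1/2`.
-/

namespace List

variable {α : Type*}

def blockStart (L : List (List α)) (t : ℕ) : ℕ := ((L.take t).map length).sum

theorem blockStart_succ (L : List (List α)) {t : ℕ} (ht : t < L.length) :
    L.blockStart (t + 1) = L.blockStart t + L[t].length := by
  simp only [blockStart]
  rw [map_take, map_take, sum_take_succ _ _ (by simpa using ht), getElem_map]

theorem exists_blockStart_le_lt (L : List (List α)) {p : ℕ} (hp : p < L.flatten.length) :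
    ∃ t < L.length, L.blockStart t ≤ p ∧ p < L.blockStart (t + 1) := by
  induction L generalizing p with
  | nil => simp at hp
  | cons x L ih =>
    by_cases hx : p < x.length
    · exact ⟨0, by simp, by simp [blockStart], by simpa [blockStart] using hx⟩
    · simp only [flatten_cons, length_append] at hp
      obtain ⟨t, ht, h₁, h₂⟩ := ih (p := p - x.length) (by omega)
      refine ⟨t + 1, by simpa using ht, ?_, ?_⟩ <;>
        simp only [blockStart, take_succ_cons, map_cons, sum_cons] at h₁ h₂ ⊢ <;> omega

theorem take_drop_flatten {L : List (List α)} {t p k : ℕ} (ht : t < L.length)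
    (h₁ : L.blockStart t ≤ p) (h₂ : p + k ≤ L.blockStart (t + 1)) :
    (L.flatten.drop p).take k = (L[t].drop (p - L.blockStart t)).take k := by
  rw [L.blockStart_succ ht] at h₂
  have hstart : (L.take t).flatten.length = L.blockStart t := by
    simp [length_flatten, blockStart]
  conv_lhs => rw [← take_append_drop t L, flatten_append, ← getElem_cons_drop ht, flatten_cons]
  rw [drop_append, hstart, drop_eq_nil_of_le (by omega), nil_append,
    drop_append_of_le_length (by omega), take_append_of_le_length (by simp; omega)]

def infixesOfLength [DecidableEq α] (w : List α) (k : ℕ) : Finset (List α) :=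
  (Finset.range (w.length + 1 - k)).image fun p => (w.drop p).take k

end List

namespace SLP

variable {α : Type}

def symbolVal (G : SLP α) : α ⊕ Fin G.n → List α
  | .inl a => [a]
  | .inr j => G.valAux j

theorem valAux_eq_flatten (G : SLP α) (i : Fin G.n) :
    G.valAux i = ((G.rhs i).map G.symbolVal).flatten := by
  have hsymbol : G.valAux i = (G.rhs i).attach.flatMap (fun s => G.symbolVal s.1) := by
    rw [valAux]
    congr 1
    funext ⟨s, _⟩
    cases s <;> rfl
  rw [hsymbol, List.flatMap_subtype (hf := fun _ _ => rfl), List.unattach_attach,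
    List.flatMap_def]

/-- `G.crossingFactor k ⟨⟨j, t⟩, o⟩` is the length-`k` factor of the word of `j` whose
letter number `o` (counting from `0`) is the last letter of the expansion of the `t`-th
symbol of the right-hand side of `j`. -/
def crossingFactor (G : SLP α) (k : ℕ)
    (x : (Σ j : Fin G.n, Fin (G.rhs j).length) × Fin k) : List α :=
  ((G.valAux x.1.1).drop
    (((G.rhs x.1.1).map G.symbolVal).blockStart (x.1.2 + 1) - (x.2 + 1))).take k

theorem exists_crossingFactor_eq (G : SLP α) {k : ℕ} (hk : 0 < k) (i : Fin G.n) {p : ℕ}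
    (hp : p + k ≤ (G.valAux i).length) :
    ∃ x, G.crossingFactor k x = ((G.valAux i).drop p).take k := by
  induction i using WellFounded.induction (measure Fin.val).wf generalizing p with
  | h i ih =>
    rw [G.valAux_eq_flatten] at hp ⊢
    set L := (G.rhs i).map G.symbolVal with hL
    obtain ⟨t, ht, h₁, h₂⟩ := L.exists_blockStart_le_lt (p := p) (by omega)
    have ht' : t < (G.rhs i).length := by simpa [hL] using ht
    have hblock : L.blockStart (t + 1) = L.blockStart t + (G.symbolVal (G.rhs i)[t]).length := by
      rw [L.blockStart_succ ht]
      simp [hL]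
    by_cases hcross : L.blockStart (t + 1) ≤ p + k
    · refine ⟨⟨⟨i, ⟨t, ht'⟩⟩, ⟨L.blockStart (t + 1) - p - 1, by omega⟩⟩, ?_⟩
      simp only [crossingFactor, ← hL, G.valAux_eq_flatten]
      congr 2
      omega
    · -- The factor lies strictly inside one block, which is therefore not a single letter.
      obtain ⟨j, hj⟩ : ∃ j, (G.rhs i)[t] = .inr j := by
        cases hs : (G.rhs i)[t] with
        | inl a => simp [hs, symbolVal] at hblock; omega
        | inr j => exact ⟨j, rfl⟩
      have hLt : L[t] = G.valAux j := by simp [hL, hj, symbolVal]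
      have hji : j < i := G.acyc i j (hj ▸ List.getElem_mem ht')
      rw [List.take_drop_flatten ht h₁ (by omega), hLt]
      exact ih j hji (by simp [hj, symbolVal] at hblock; omega)

theorem card_infixesOfLength_val_le [DecidableEq α] (G : SLP α) {k : ℕ} (hk : 0 < k) :
    (G.val.infixesOfLength k).card ≤ G.size * k := by
  have hsub : G.val.infixesOfLength k ⊆ Finset.univ.image (G.crossingFactor k) := by
    simp only [List.infixesOfLength, Finset.image_subset_iff, Finset.mem_range,
      Finset.mem_image, Finset.mem_univ, true_and]
    exact fun p hp => G.exists_crossingFactor_eq hk G.start (by unfold val at hp; omega)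
  calc (G.val.infixesOfLength k).card
      ≤ (Finset.univ.image (G.crossingFactor k)).card := Finset.card_le_card hsub
    _ ≤ Fintype.card ((Σ j : Fin G.n, Fin (G.rhs j).length) × Fin k) := Finset.card_image_le
    _ = G.size * k := by simp [Fintype.card_sigma, size]

end SLP

theorem IsDeBruijn.card_infixesOfLength {n : ℕ} {B : List Bool} (hB : IsDeBruijn n B)
    (hn : 0 < n) :
    (B.infixesOfLength n).card = 2 ^ n + 1 - n := by
  obtain ⟨hlen, hunique⟩ := hB
  have hpow : n < 2 ^ n := Nat.lt_two_pow_self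
  have hcyclic : ∀ i, i + n ≤ 2 ^ n →
      ((B ++ B.take (n - 1)).drop i).take n = (B.drop i).take n := fun i hi => by
    rw [List.drop_append_of_le_length (by omega),
      List.take_append_of_le_length (by simp [hlen]; omega)]
  rw [List.infixesOfLength, Finset.card_image_of_injOn, Finset.card_range, hlen]
  intro i₁ hi₁ i₂ hi₂ heq
  simp only [Finset.coe_range, Set.mem_Iio, Nat.lt_sub_iff_add_lt, Nat.lt_succ_iff] at hi₁ hi₂
  obtain ⟨i, -, hi⟩ := hunique ((B.drop i₁).take n) (by simp [hlen]; omega)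
  rw [hi i₁ ⟨by omega, hcyclic i₁ (by omega)⟩,
    hi i₂ ⟨by omega, (hcyclic i₂ (by omega)).trans heq.symm⟩]

/-- Every SLP producing a binary De Bruijn sequence of order `n` has size at least
`c·2ⁿ/n` for an absolute constant `c > 0`. -/
theorem deBruijn_slp_lower_bound :
    ∃ c : ℝ, 0 < c ∧ ∀ (n : ℕ) (B : List Bool), 1 ≤ n → IsDeBruijn n B →
      ∀ G : SLP Bool, G.val = B → c * 2 ^ n / n ≤ (G.size : ℝ) := by
  refine ⟨1 / 2, by norm_num, fun n B hn hB G hG => ?_⟩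
  have hcount : 2 ^ n + 1 - n ≤ G.size * n := by
    rw [← hB.card_infixesOfLength hn, ← hG]
    exact G.card_infixesOfLength_val_le hn
  have hpow : 2 * n ≤ 2 ^ n := by
    obtain ⟨m, rfl⟩ : ∃ m, n = m + 1 := ⟨n - 1, by omega⟩
    have hm : m < 2 ^ m := Nat.lt_two_pow_self
    rw [pow_succ]
    omega
  have hbound : (2 : ℝ) ^ n ≤ 2 * (G.size * n) := by
    exact_mod_cast (by omega : 2 ^ n ≤ 2 * (G.size * n))
  rw [div_le_iff₀ (by positivity)]
  linarith
end

section
/- Let Σ = {c₀,…,c_{k-1}} and φ: Σ^* → {a,b}^* the homomorphism with φ(c_i) = a^i b. If w ∈ Σ^* contains every symbol of Σ, then from any SLP A producing w one obtains an SLP producing φ(w) of size at most 3·|A|; in particular g(φ(w)) ≤ 3·g(w). -/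
/-- The binary encoding `φ : {c₀,…,c_{k-1}}^* → {a,b}^*`, `φ(c_i) = aⁱb`,
where `a := true` and `b := false`. -/
def phi {k : ℕ} (w : List (Fin k)) : List Bool :=
  (w.map (fun c => List.replicate (c : ℕ) true ++ [false])).flatten


/-!
Given an SLP `A` for `w`, add nonterminals `A₀ → b` and `Aᵢ → a Aᵢ₋₁`, so that `Aᵢ` derives
`aⁱb = φ(cᵢ)`, and replace every letter `cᵢ` in the rules of `A` by `Aᵢ`. By induction along the
acyclic order each old nonterminal now derives the `φ`-image of its old word, and the size grows
by at most `2k`. Since every letter occurs in `w`, every letter occurs in some right-hand side of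
`A`, so `k ≤ |A|` and the new size is at most `3|A|`. Applied to a smallest SLP for `w` this
gives `g(φ(w)) ≤ 3 g(w)`.
-/

namespace SLP

variable {α : Type}

theorem valAux_eq_flatMap (G : SLP α) (i : Fin G.n) :
    G.valAux i = (G.rhs i).flatMap (Sum.elim (fun a => [a]) G.valAux) := by
  rw [valAux, List.flatMap_subtype (g := Sum.elim (fun a => [a]) G.valAux)
    (by rintro (a | j) _ <;> rfl), List.unattach_attach]

theorem induction (G : SLP α) {P : Fin G.n → Prop}
    (step : ∀ i, (∀ j, Sum.inr j ∈ G.rhs i → P j) → P i) (i : Fin G.n) : P i := by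
  induction h : (i : ℕ) using Nat.strong_induction_on generalizing i with
  | _ m ih => exact step i fun j hj => ih j (h ▸ G.acyc i j hj) j rfl

theorem exists_inl_mem_rhs_of_mem_valAux (G : SLP α) {a : α} (i : Fin G.n)
    (ha : a ∈ G.valAux i) : ∃ j, Sum.inl a ∈ G.rhs j := by
  induction i using G.induction with
  | step i ih =>
    rw [valAux_eq_flatMap, List.mem_flatMap] at ha
    obtain ⟨s | j, hs, has⟩ := ha
    · rw [Sum.elim_inl, List.mem_singleton] at has
      exact ⟨i, has ▸ hs⟩
    · exact ih j hs has

theorem card_le_size_of_forall_mem_val [Fintype α] (G : SLP α) (h : ∀ a, a ∈ G.val) :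
    Fintype.card α ≤ G.size := by
  classical
  have hsub : Finset.univ.map (Function.Embedding.inl (β := Fin G.n)) ⊆
      Finset.univ.biUnion fun i => (G.rhs i).toFinset := by
    intro s hs
    obtain ⟨a, -, rfl⟩ := Finset.mem_map.mp hs
    obtain ⟨j, hj⟩ := G.exists_inl_mem_rhs_of_mem_valAux G.start (h a)
    exact Finset.mem_biUnion.mpr ⟨j, Finset.mem_univ j, List.mem_toFinset.mpr hj⟩
  calc Fintype.card α = (Finset.univ.map (Function.Embedding.inl (β := Fin G.n))).card := by
          simp
    _ ≤ (Finset.univ.biUnion fun i => (G.rhs i).toFinset).card := Finset.card_le_card hsub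
    _ ≤ ∑ i, (G.rhs i).toFinset.card := Finset.card_biUnion_le
    _ ≤ G.size := Finset.sum_le_sum fun i _ => List.toFinset_card_le _

def ofWord (w : List α) (hw : w ≠ []) : SLP α where
  n := 1
  rhs _ := w.map Sum.inl
  rhs_ne _ := by simpa using hw
  acyc _ _ h := by simp at h
  start := 0

theorem ofWord_val (w : List α) (hw : w ≠ []) : (ofWord w hw).val = w := by
  rw [val, valAux_eq_flatMap]
  simp [ofWord, List.flatMap_map]

end SLP

theorem exists_size_eq_g {α : Type} {w : List α} (hw : w ≠ []) :
    ∃ G : SLP α, G.size = g w ∧ G.val = w :=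
  Nat.sInf_mem (s := {s | ∃ G : SLP α, G.size = s ∧ G.val = w})
    ⟨_, SLP.ofWord w hw, rfl, SLP.ofWord_val w hw⟩

theorem g_le_size {α : Type} (G : SLP α) : g G.val ≤ G.size :=
  Nat.sInf_le ⟨G, rfl, rfl⟩

-- `w` is elaborated in `phi` through a coercion to `List ℕ`, so this is not a definitional unfolding.
theorem phi_eq_flatMap {k : ℕ} (w : List (Fin k)) :
    phi w = w.flatMap fun c : Fin k => List.replicate c true ++ [false] := by
  simp only [phi, List.pure_def, List.bind_eq_flatMap, ← List.flatMap_def, List.flatMap_assoc,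
    List.flatMap_singleton]

theorem phi_flatMap {k : ℕ} {β : Type} (l : List β) (f : β → List (Fin k)) :
    phi (l.flatMap f) = l.flatMap fun b => phi (f b) := by
  simp only [phi_eq_flatMap, List.flatMap_assoc]

theorem phi_singleton {k : ℕ} (c : Fin k) : phi [c] = List.replicate c true ++ [false] := by
  simp [phi_eq_flatMap]

namespace SLP

def phiChain {k : ℕ} (n : ℕ) : Fin k → List (Bool ⊕ Fin (k + n))
  | ⟨0, _⟩ => [.inl false]
  | ⟨m + 1, h⟩ => [.inl true, .inr ⟨m, by omega⟩]

theorem phiChain_ne_nil {k : ℕ} (n : ℕ) (i : Fin k) : phiChain n i ≠ [] := by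
  rcases i with ⟨_ | m, h⟩ <;> simp [phiChain]

theorem val_lt_of_inr_mem_phiChain {k n : ℕ} {i : Fin k} {j : Fin (k + n)}
    (hj : .inr j ∈ phiChain n i) : (j : ℕ) < i := by
  rcases i with ⟨_ | m, h⟩ <;> simp [phiChain] at hj
  simp [hj]

theorem length_phiChain_le {k : ℕ} (n : ℕ) (i : Fin k) : (phiChain n i).length ≤ 2 := by
  rcases i with ⟨_ | m, h⟩ <;> simp [phiChain]

variable {k : ℕ} (A : SLP (Fin k))

/-- Nonterminals `0, …, k-1` are the chain `Aᵢ` of `phiChain`; nonterminal `k + j` is rule `j`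
of `A` with every letter `cᵢ` replaced by `Aᵢ`. -/
def encodePhi : SLP Bool where
  n := k + A.n
  rhs := Fin.addCases (phiChain A.n) fun j => (A.rhs j).map (.inr ∘ finSumFinEquiv)
  rhs_ne i := by
    induction i using Fin.addCases with
    | left i => simpa using phiChain_ne_nil A.n i
    | right j => simpa using A.rhs_ne j
  acyc i j hj := by
    induction i using Fin.addCases with
    | left i => simpa using val_lt_of_inr_mem_phiChain (by simpa using hj)
    | right i =>
      simp only [Fin.addCases_right, List.mem_map, Function.comp_apply, Sum.inr.injEq] at hj
      obtain ⟨c | j', hs, rfl⟩ := hj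
      · simp; omega
      · simpa using A.acyc i j' hs
  start := Fin.natAdd k A.start

theorem encodePhi_rhs_castAdd (i : Fin k) :
    (encodePhi A).rhs (Fin.castAdd A.n i) = phiChain A.n i := by
  simp [encodePhi]

theorem encodePhi_rhs_natAdd (j : Fin A.n) :
    (encodePhi A).rhs (Fin.natAdd k j) = (A.rhs j).map (.inr ∘ finSumFinEquiv) := by
  simp [encodePhi]

theorem valAux_encodePhi_castAdd (i : Fin k) :
    (encodePhi A).valAux (Fin.castAdd A.n i) = List.replicate i true ++ [false] := by
  obtain ⟨m, h⟩ := i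
  induction m with
  | zero =>
    rw [valAux_eq_flatMap (encodePhi A) (Fin.castAdd A.n ⟨0, h⟩), encodePhi_rhs_castAdd]
    rfl
  | succ m ih =>
    rw [valAux_eq_flatMap (encodePhi A) (Fin.castAdd A.n ⟨m + 1, h⟩), encodePhi_rhs_castAdd]
    show [true] ++ ((encodePhi A).valAux (Fin.castAdd A.n ⟨m, by omega⟩) ++ []) = _
    rw [ih]
    simp [List.replicate_succ]

theorem valAux_encodePhi_natAdd (j : Fin A.n) :
    (encodePhi A).valAux (Fin.natAdd k j) = phi (A.valAux j) := by
  induction j using A.induction with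
  | step j ih =>
    rw [valAux_eq_flatMap A, phi_flatMap, valAux_eq_flatMap (encodePhi A) (Fin.natAdd k j),
      encodePhi_rhs_natAdd, List.flatMap_map]
    refine List.flatMap_congr fun s hs => ?_
    rcases s with c | j'
    · exact (valAux_encodePhi_castAdd A c).trans (phi_singleton c).symm
    · exact ih j' hs

theorem encodePhi_val : (encodePhi A).val = phi A.val :=
  valAux_encodePhi_natAdd A A.start

theorem size_encodePhi_le : (encodePhi A).size ≤ 2 * k + A.size := by
  show ∑ i : Fin (k + A.n), ((encodePhi A).rhs i).length ≤ 2 * k + A.size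
  rw [Fin.sum_univ_add]
  simp only [encodePhi_rhs_castAdd, encodePhi_rhs_natAdd, List.length_map]
  refine add_le_add ?_ le_rfl
  calc ∑ i : Fin k, (phiChain A.n i).length ≤ ∑ _i : Fin k, 2 :=
        Finset.sum_le_sum fun i _ => length_phiChain_le A.n i
    _ = 2 * k := by simp [mul_comm]

end SLP

/-- If every letter of `Σ = {c₀,…,c_{k-1}}` occurs in `w`, then from any SLP `A` for `w`
one obtains an SLP for `φ(w)` of size at most `3·|A|`; in particular `g(φ(w)) ≤ 3·g(w)`. -/
theorem slp_encode (k : ℕ) (hk : 1 ≤ k) (w : List (Fin k)) (hall : ∀ c : Fin k, c ∈ w) :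
    (∀ A : SLP (Fin k), A.val = w →
      ∃ B : SLP Bool, B.val = phi w ∧ B.size ≤ 3 * A.size) ∧
    g (phi w) ≤ 3 * g w := by
  have encode : ∀ A : SLP (Fin k), A.val = w →
      ∃ B : SLP Bool, B.val = phi w ∧ B.size ≤ 3 * A.size := by
    rintro A rfl
    refine ⟨A.encodePhi, A.encodePhi_val, ?_⟩
    have hkA : k ≤ A.size := by simpa using A.card_le_size_of_forall_mem_val hall
    have := A.size_encodePhi_le
    omega
  refine ⟨encode, ?_⟩
  obtain ⟨A, hA, rfl⟩ := exists_size_eq_g (List.ne_nil_of_mem (hall ⟨0, hk⟩))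
  obtain ⟨B, hB, hBA⟩ := encode A rfl
  calc g (phi A.val) = g B.val := by rw [hB]
    _ ≤ B.size := g_le_size B
    _ ≤ 3 * A.size := hBA
    _ = 3 * g A.val := by rw [hA]
end
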